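/- arXiv:1606.08079 — 2 statements merged into one kernel-verified Lean document; each statement's English description precedes it below -/
import Mathlib

section
/- Let g > 1 and a ≥ 0 be real numbers, and let (p_k)_{k≥1} be the sequence of real numbers determined by p₁ = (g+a)/(g(1+a)+g−1) and the recurrence p_k = ((k−1+a)/(k + g(1+a)/(g−1)))·p_{k−1} for k ≥ 2. Then for every k ≥ 1, p_k = (B(k+a, 1+(g+a)/(g−1)) / B(1+a, 1+(g+a)/(g−1))) · (g+a)/(g−1+g(1+a)), where B(x,y) = Γ(x)Γ(y)/Γ(x+y) is the Beta function. -/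
/-- The Beta function `B(x,y) = Γ(x)Γ(y)/Γ(x+y)`. -/
noncomputable def Beta (x y : ℝ) : ℝ :=
  Real.Gamma x * Real.Gamma y / Real.Gamma (x + y)

lemma Beta_pos (x y : ℝ) (hx : 0 < x) (hy : 0 < y) : 0 < Beta x y := by
  have hxy : 0 < x + y := by linarith
  unfold Beta
  exact div_pos (mul_pos (Real.Gamma_pos_of_pos hx) (Real.Gamma_pos_of_pos hy))
    (Real.Gamma_pos_of_pos hxy)

lemma Beta_succ (x y : ℝ) (hx : 0 < x) (hy : 0 < y) :
    Beta (x + 1) y = (x / (x + y)) * Beta x y := by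
  have hxy : 0 < x + y := by linarith
  have h1 : Real.Gamma (x + 1) = x * Real.Gamma x := Real.Gamma_add_one hx.ne'
  have h2 : Real.Gamma (x + 1 + y) = (x + y) * Real.Gamma (x + y) := by
    rw [show x + 1 + y = (x + y) + 1 by ring, Real.Gamma_add_one hxy.ne']
  have g3 := (Real.Gamma_pos_of_pos hxy).ne'
  unfold Beta
  rw [h1, h2]
  field_simp

/-- For real `g > 1`, `a ≥ 0`, the sequence determined by
`p₁ = (g+a)/(g(1+a)+g−1)` and `p_k = ((k−1+a)/(k + g(1+a)/(g−1)))·p_{k−1}` for `k ≥ 2`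
satisfies, for every `k ≥ 1`,
`p_k = (B(k+a, 1+(g+a)/(g−1)) / B(1+a, 1+(g+a)/(g−1))) · (g+a)/(g−1+g(1+a))`. -/
theorem facet_degree_closed_form (g a : ℝ) (hg : 1 < g) (ha : 0 ≤ a)
    (p : ℕ → ℝ)
    (h1 : p 1 = (g + a) / (g * (1 + a) + g - 1))
    (hrec : ∀ k : ℕ, 2 ≤ k →
      p k = (((k : ℝ) - 1 + a) / ((k : ℝ) + g * (1 + a) / (g - 1))) * p (k - 1)) :
    ∀ k : ℕ, 1 ≤ k →
      p k = (Beta ((k : ℝ) + a) (1 + (g + a) / (g - 1)) /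
              Beta (1 + a) (1 + (g + a) / (g - 1))) *
            ((g + a) / (g - 1 + g * (1 + a))) := by
  have hg1 : (0:ℝ) < g - 1 := by linarith
  set t : ℝ := 1 + (g + a) / (g - 1) with ht
  have htpos : 0 < t := by
    have : 0 ≤ (g + a) / (g - 1) := div_nonneg (by linarith) hg1.le
    rw [ht]; linarith
  intro k hk
  induction k, hk using Nat.le_induction with
  | base =>
    have hb := (Beta_pos (1 + a) t (by linarith) htpos).ne'
    rw [h1]
    push_cast
    rw [div_self hb, one_mul]
    congr 1
    ring
  | succ k hk ih =>
    have hka : (0:ℝ) < (k : ℝ) + a := by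
      have : (1:ℝ) ≤ (k:ℝ) := by exact_mod_cast hk
      linarith
    have hr := hrec (k + 1) (by omega)
    simp only [Nat.add_sub_cancel] at hr
    push_cast at hr
    rw [hr, ih]
    have hbs : Beta ((k:ℝ) + 1 + a) t = (((k:ℝ) + a) / (((k:ℝ) + a) + t)) * Beta ((k:ℝ) + a) t := by
      rw [show (k:ℝ) + 1 + a = ((k:ℝ) + a) + 1 by ring]
      exact Beta_succ ((k:ℝ) + a) t hka htpos
    push_cast
    rw [hbs]
    have hden : ((k:ℝ) + a) + t = (k:ℝ) + 1 + g * (1 + a) / (g - 1) := by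
      rw [ht]
      field_simp
      ring
    rw [hden]
    ring
end

section
/- Let f, s, k be positive real numbers with k ≤ f·s, and let m be a natural number with 2 ≤ m ≤ s. Then the probability that a fixed existing node of facet degree k receives more than one merge from the incoming facet satisfies ∑_{l=2}^{m} C(m,l)·(k/(f·s))^l·(1 − k/(f·s))^{m−l} ≤ e^{k/f} − 1 − k/f. -/
/-! Each binomial term is dominated by the corresponding Poisson-type term:
`C(m,l) pˡ (1-p)^(m-l) ≤ (m p)ˡ / l!`, and `m p ≤ s · k/(f s) = k/f`. Summing over `l ≥ 2`
leaves a piece of the exponential series of `k/f` with its first two terms removed. -/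

open Finset

theorem choose_mul_pow_mul_one_sub_pow_le {p : ℝ} (hp0 : 0 ≤ p) (hp1 : p ≤ 1) (m l : ℕ) :
    (m.choose l : ℝ) * p ^ l * (1 - p) ^ (m - l) ≤ ((m : ℝ) * p) ^ l / l.factorial := calc
  (m.choose l : ℝ) * p ^ l * (1 - p) ^ (m - l) ≤ (m.choose l : ℝ) * p ^ l :=
    mul_le_of_le_one_right (by positivity) (pow_le_one₀ (by linarith) (by linarith))
  _ ≤ (m : ℝ) ^ l / l.factorial * p ^ l := by
    gcongr
    exact Nat.choose_le_pow_div l m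
  _ = ((m : ℝ) * p) ^ l / l.factorial := by ring

theorem Real.sum_Icc_two_pow_div_factorial_le {x : ℝ} (hx : 0 ≤ x) (m : ℕ) :
    ∑ l ∈ Icc 2 m, x ^ l / l.factorial ≤ Real.exp x - 1 - x := by
  have hsplit := sum_range_add_sum_Ico (fun l ↦ x ^ l / l.factorial) (by omega : 2 ≤ m + 2)
  have hsub : ∑ l ∈ Icc 2 m, x ^ l / l.factorial ≤ ∑ l ∈ Ico 2 (m + 2), x ^ l / l.factorial :=
    sum_le_sum_of_subset_of_nonneg (fun l hl ↦ by simp at hl ⊢; omega)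
      (fun _ _ _ ↦ by positivity)
  have hhead : ∑ l ∈ range 2, x ^ l / l.factorial = 1 + x := by simp [sum_range_succ]
  have hexp := Real.sum_le_exp_of_nonneg hx (m + 2)
  linarith

theorem sum_Icc_two_binomial_le_exp {p x : ℝ} (hp0 : 0 ≤ p) (hp1 : p ≤ 1) {m : ℕ}
    (hmp : (m : ℝ) * p ≤ x) :
    ∑ l ∈ Icc 2 m, (m.choose l : ℝ) * p ^ l * (1 - p) ^ (m - l) ≤ Real.exp x - 1 - x := calc
  _ ≤ ∑ l ∈ Icc 2 m, x ^ l / l.factorial := sum_le_sum fun l _ ↦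
    (choose_mul_pow_mul_one_sub_pow_le hp0 hp1 m l).trans (by gcongr)
  _ ≤ Real.exp x - 1 - x :=
    Real.sum_Icc_two_pow_div_factorial_le ((by positivity : (0 : ℝ) ≤ m * p).trans hmp) m

theorem multiple_merge_prob_bound_general (f s k : ℝ) (hf : 0 < f) (hs : 0 < s) (hk : 0 < k)
    (hkfs : k ≤ f * s) (m : ℕ) (hms : (m : ℝ) ≤ s) :
    ∑ l ∈ Finset.Icc 2 m,
        (m.choose l : ℝ) * (k / (f * s)) ^ l * (1 - k / (f * s)) ^ (m - l) ≤
      Real.exp (k / f) - 1 - k / f := by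
  have hfs : 0 < f * s := mul_pos hf hs
  have hp0 : 0 ≤ k / (f * s) := by positivity
  apply sum_Icc_two_binomial_le_exp hp0 ((div_le_one hfs).mpr hkfs)
  calc (m : ℝ) * (k / (f * s)) ≤ s * (k / (f * s)) := by gcongr
    _ = k / f := by field_simp

/-- For positive reals `f, s, k` with `k ≤ f·s` and a natural `m` with
`2 ≤ m ≤ s`, the probability that a fixed existing node of facet degree `k` receives more
than one merge from the incoming facet satisfies
`∑_{l=2}^{m} C(m,l)·(k/(f·s))^l·(1 − k/(f·s))^{m−l} ≤ e^{k/f} − 1 − k/f`. -/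
theorem multiple_merge_prob_bound (f s k : ℝ) (hf : 0 < f) (hs : 0 < s) (hk : 0 < k)
    (hkfs : k ≤ f * s) (m : ℕ) (hm2 : 2 ≤ m) (hms : (m : ℝ) ≤ s) :
    ∑ l ∈ Finset.Icc 2 m,
        (m.choose l : ℝ) * (k / (f * s)) ^ l * (1 - k / (f * s)) ^ (m - l) ≤
      Real.exp (k / f) - 1 - k / f :=
  multiple_merge_prob_bound_general f s k hf hs hk hkfs m hms
end
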